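/- Let f : ℤ² → ℂ satisfy f(n) = λ_σ^n := λ_{σ,1}^{|n₁|} λ_{σ,2}^{|n₂|} for n in the (half-open) quadrant indexed by σ, with λ_σ ∈ 𝔻² and λ_{σ,1}·λ_{σ,2} ≠ 0 for some σ. Let (λ_n)_{n∈ℕ} enumerate the multiset {f(n) : n ∈ ℤ²} in order of decreasing modulus. Then lim_{n→∞} (−log|λ_n|)/√n = η₂, where η₂ = ( (1/2) ∑_{σ : λ_{σ,1}λ_{σ,2} ≠ 0} (log|λ_{σ,1}| · log|λ_{σ,2}|)^{-1} )^{-1/2}. -/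

import Mathlib

/-!
Write `-log |f m| = a_σ |m₁| + b_σ |m₂|` on the quadrant `σ` of `m`, with `a_σ, b_σ > 0`
(no `λ_{σ,i}` can vanish: some quadrant carries infinitely many nonzero values, and a
modulus-decreasing enumeration of `ℤ²` never returns to nonzero values after a zero).
Relabelling each quadrant by `ℕ²` changes this exponent by at most `a_σ + b_σ`, so the number of
`m` with `-log |f m| ≤ y` is, up to a bounded shift of `y`, the number of lattice points in the
four triangles `a_σ u + b_σ v ≤ y`; summing columns, that number is `A y² + O(y + 1)` with
`A = ∑_σ 1 / (2 a_σ b_σ)`. As the enumeration is monotone in the exponent, its `k`-th exponent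
`g k` satisfies `A (g k)² ≈ k` up to `O(1)` in `g k`, whence `g k / √k → A^{-1/2} = η₂`.
-/

open Finset Filter Topology

section MonotoneEnumeration

variable {α : Type*} {G : α → ℝ} {E : ℕ ≃ α}

theorem succ_le_card_of_monotone_comp (hG : Monotone (G ∘ E)) {k : ℕ} {S : Finset α}
    (hS : ∀ p, G p ≤ G (E k) → p ∈ S) : k + 1 ≤ S.card := by
  have hsub : (range (k + 1)).map E.toEmbedding ⊆ S := by
    intro p hp
    obtain ⟨j, hj, rfl⟩ := mem_map.mp hp
    exact hS _ (hG (Nat.lt_succ_iff.mp (mem_range.mp hj)))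
  simpa using card_le_card hsub

theorem le_of_lt_card_of_monotone_comp (hG : Monotone (G ∘ E)) {k : ℕ} {x : ℝ}
    {S : Finset α} (hS : ∀ p ∈ S, G p ≤ x) (hk : k < S.card) : G (E k) ≤ x := by
  by_contra! hx
  have hsub : S.map E.symm.toEmbedding ⊆ range k := by
    intro j hj
    obtain ⟨p, hp, rfl⟩ := mem_map.mp hj
    by_contra! hkj
    have : G (E k) ≤ G p := by simpa using hG (not_lt.mp (mt mem_range.mpr hkj))
    linarith [hS p hp]
  exact (card_le_card hsub).not_gt (by simpa using hk)

end MonotoneEnumeration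

theorem ne_zero_of_antitone_norm {α E : Type*} [NormedAddGroup E] {f : α → E} (e : ℕ ≃ α)
    (hf : Antitone fun k => ‖f (e k)‖) (hinf : {m | f m ≠ 0}.Infinite) (m : α) :
    f m ≠ 0 := by
  intro hm
  refine hinf ((Set.finite_Iio (e.symm m)).image e |>.subset fun n hn => ?_)
  refine ⟨e.symm n, Set.mem_Iio.mpr (lt_of_not_ge fun hle => hn ?_), e.apply_symm_apply n⟩
  simpa [hm] using hf hle

theorem tendsto_div_sqrt_of_abs_sub_le {g : ℕ → ℝ} {L C : ℝ}
    (h : ∀ k, |g k - L * √k| ≤ C) : Tendsto (fun k : ℕ => g k / √k) atTop (𝓝 L) := by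
  have hC : Tendsto (fun k : ℕ => C / √k) atTop (𝓝 0) :=
    tendsto_const_nhds.div_atTop (Real.tendsto_sqrt_atTop.comp tendsto_natCast_atTop_atTop)
  rw [tendsto_iff_norm_sub_tendsto_zero]
  refine squeeze_zero' (Eventually.of_forall fun _ => norm_nonneg _) ?_ hC
  filter_upwards [eventually_ge_atTop 1] with k hk
  have hk : 0 < √(k : ℝ) := Real.sqrt_pos.mpr (by exact_mod_cast hk)
  calc ‖g k / √k - L‖ = |g k - L * √k| / √k := by
        rw [Real.norm_eq_abs, ← abs_of_pos hk, ← abs_div, abs_of_pos hk]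
        congr 1; field_simp
    _ ≤ C / √k := by gcongr; exact h k

section LatticeTriangle

variable {a b y : ℝ}

noncomputable def latticeTriangle (a b y : ℝ) : Finset (ℕ × ℕ) :=
  (range (⌊y / a⌋₊ + 1) ×ˢ range (⌊y / b⌋₊ + 1)).filter fun p => a * p.1 + b * p.2 ≤ y

theorem Nat.le_floor_div_iff {n : ℕ} (hb : 0 < b) (hy : 0 ≤ y) : n ≤ ⌊y / b⌋₊ ↔ b * n ≤ y := by
  rw [Nat.le_floor_iff (div_nonneg hy hb.le), le_div_iff₀' hb]

theorem mem_latticeTriangle (ha : 0 < a) (hb : 0 < b) {p : ℕ × ℕ} :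
    p ∈ latticeTriangle a b y ↔ a * p.1 + b * p.2 ≤ y := by
  refine ⟨fun h => (mem_filter.mp h).2, fun h => mem_filter.mpr ⟨?_, h⟩⟩
  have hy : 0 ≤ y := le_trans (by positivity) h
  simp only [mem_product, mem_range, Nat.lt_succ_iff, Nat.le_floor_div_iff ha hy,
    Nat.le_floor_div_iff hb hy]
  constructor <;> nlinarith [(p.1.cast_nonneg : (0 : ℝ) ≤ p.1), (p.2.cast_nonneg : (0 : ℝ) ≤ p.2)]

theorem card_latticeTriangle (ha : 0 < a) (hb : 0 < b) (hy : 0 ≤ y) :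
    (latticeTriangle a b y).card = ∑ u ∈ range (⌊y / a⌋₊ + 1), (⌊(y - a * u) / b⌋₊ + 1) := by
  rw [latticeTriangle, card_filter, sum_product]
  refine sum_congr rfl fun u hu => ?_
  have hu : a * u ≤ y := (Nat.le_floor_div_iff ha hy).mp (Nat.lt_succ_iff.mp (mem_range.mp hu))
  rw [← card_filter, ← card_range (⌊(y - a * u) / b⌋₊ + 1)]
  congr 1
  ext v
  simp only [mem_filter, mem_range, Nat.lt_succ_iff, Nat.le_floor_div_iff hb hy,
    Nat.le_floor_div_iff hb (sub_nonneg.mpr hu)]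
  constructor
  · rintro ⟨-, h⟩; linarith
  · intro h; constructor <;> nlinarith [(u.cast_nonneg : (0 : ℝ) ≤ u)]

theorem sum_range_sub_mul (n : ℕ) :
    ∑ u ∈ range n, (y - a * u) = n * y - a * (n * (n - 1) / 2) := by
  induction n with
  | zero => simp
  | succ n ih => rw [sum_range_succ, ih]; push_cast; ring

theorem sq_div_le_card_latticeTriangle (ha : 0 < a) (hb : 0 < b) (hy : 0 ≤ y) :
    y ^ 2 / (2 * a * b) ≤ (latticeTriangle a b y).card := by
  set t : ℕ := ⌊y / a⌋₊ + 1
  have hterm : ∀ u ∈ range t, (y - a * u) / b ≤ ((⌊(y - a * u) / b⌋₊ + 1 : ℕ) : ℝ) :=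
    fun u _ => by push_cast; exact (Nat.lt_floor_add_one _).le
  calc y ^ 2 / (2 * a * b) ≤ (t * y - a * (t * (t - 1) / 2)) / b := by
        have hd : 0 < a * t - y ∧ a * t - y ≤ a := by
          have h₁ := (Nat.le_floor_div_iff ha hy).mp le_rfl
          have h₂ := Nat.lt_floor_add_one (y / a)
          rw [div_lt_iff₀ ha] at h₂
          simp only [t]; push_cast; constructor <;> linarith
        -- `2aty - a²t(t - 1) - y² = a²t - (at - y)²` and `(at - y)² ≤ a² ≤ a²t`
        have key : y ^ 2 ≤ 2 * a * (t * y - a * (t * (t - 1) / 2)) := by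
          have ht1 : (1 : ℝ) ≤ t := by simp [t]
          nlinarith [mul_le_mul_of_nonneg_left hd.2 hd.1.le,
            mul_le_mul_of_nonneg_left ht1 (sq_nonneg a)]
        rw [div_le_div_iff₀ (by positivity) hb]
        nlinarith [mul_le_mul_of_nonneg_right key hb.le]
    _ = ∑ u ∈ range t, (y - a * u) / b := by rw [← sum_div, sum_range_sub_mul]
    _ ≤ (latticeTriangle a b y).card := by
        rw [card_latticeTriangle ha hb hy, Nat.cast_sum]; exact sum_le_sum hterm

theorem card_latticeTriangle_le (ha : 0 < a) (hb : 0 < b) (hy : 0 ≤ y) :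
    ((latticeTriangle a b y).card : ℝ) ≤ (y + a + b) ^ 2 / (2 * a * b) := by
  set t : ℕ := ⌊y / a⌋₊ + 1
  have hterm : ∀ u ∈ range t, ((⌊(y - a * u) / b⌋₊ + 1 : ℕ) : ℝ) ≤ (y - a * u) / b + 1 := by
    intro u hu
    have hu : a * u ≤ y :=
      (Nat.le_floor_div_iff ha hy).mp (Nat.lt_succ_iff.mp (mem_range.mp hu))
    push_cast
    exact add_le_add_left (Nat.floor_le (div_nonneg (sub_nonneg.mpr hu) hb.le)) 1
  calc ((latticeTriangle a b y).card : ℝ) ≤ ∑ u ∈ range t, ((y - a * u) / b + 1) := by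
        rw [card_latticeTriangle ha hb hy, Nat.cast_sum]; exact sum_le_sum hterm
    _ = (t * y - a * (t * (t - 1) / 2)) / b + t := by
        rw [sum_add_distrib, ← sum_div, sum_range_sub_mul]; simp
    _ ≤ (y + a + b) ^ 2 / (2 * a * b) := by
        -- the left side is a quadratic in `t`, maximal at `a t = y + a / 2 + b`
        have key : 2 * a * (t * y - a * (t * (t - 1) / 2)) + 2 * a * b * t ≤ (y + a + b) ^ 2 := by
          nlinarith [sq_nonneg (a * t - (y + a / 2 + b))]
        rw [div_add' _ _ _ hb.ne', div_le_div_iff₀ hb (by positivity)]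
        nlinarith [mul_le_mul_of_nonneg_left key hb.le]

end LatticeTriangle

/-- `n ≥ 0` is sent to `(true, n)` and `n < 0` to `(false, -n - 1)`. -/
def intEquivBoolNat : ℤ ≃ Bool × ℕ where
  toFun n := (decide (0 ≤ n), if 0 ≤ n then n.toNat else (-n - 1).toNat)
  invFun p := if p.1 then p.2 else -(p.2 + 1)
  left_inv n := by
    by_cases h : 0 ≤ n <;> simp [h]
    omega
  right_inv := by
    rintro ⟨_ | _, u⟩ <;> simp
    omega

theorem intEquivBoolNat_snd_le_natAbs (n : ℤ) : (intEquivBoolNat n).2 ≤ n.natAbs := by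
  simp only [intEquivBoolNat, Equiv.coe_fn_mk]; split <;> omega

theorem natAbs_le_intEquivBoolNat_snd_add_one (n : ℤ) :
    n.natAbs ≤ (intEquivBoolNat n).2 + 1 := by
  simp only [intEquivBoolNat, Equiv.coe_fn_mk]; split <;> omega

def quadrant (m : ℤ × ℤ) : Bool × Bool := (decide (0 ≤ m.1), decide (0 ≤ m.2))

def quadrantEquiv : ℤ × ℤ ≃ Σ _ : Bool × Bool, ℕ × ℕ :=
  (intEquivBoolNat.prodCongr intEquivBoolNat).trans
    ((Equiv.prodProdProdComm Bool ℕ Bool ℕ).trans (Equiv.sigmaEquivProd _ _).symm)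

theorem quadrantEquiv_fst (m : ℤ × ℤ) : (quadrantEquiv m).1 = quadrant m := rfl

theorem quadrant_quadrantEquiv_symm (p : Σ _ : Bool × Bool, ℕ × ℕ) :
    quadrant (quadrantEquiv.symm p) = p.1 := by
  rw [← quadrantEquiv_fst, Equiv.apply_symm_apply]

theorem quadrantEquiv_snd_le_natAbs (m : ℤ × ℤ) :
    (quadrantEquiv m).2.1 ≤ m.1.natAbs ∧ (quadrantEquiv m).2.2 ≤ m.2.natAbs :=
  ⟨intEquivBoolNat_snd_le_natAbs m.1, intEquivBoolNat_snd_le_natAbs m.2⟩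

theorem natAbs_le_quadrantEquiv_snd_add_one (m : ℤ × ℤ) :
    m.1.natAbs ≤ (quadrantEquiv m).2.1 + 1 ∧ m.2.natAbs ≤ (quadrantEquiv m).2.2 + 1 :=
  ⟨natAbs_le_intEquivBoolNat_snd_add_one m.1, natAbs_le_intEquivBoolNat_snd_add_one m.2⟩

def coneExp {𝕜 : Type*} [Monoid 𝕜] (l : Bool × Bool → 𝕜 × 𝕜) (m : ℤ × ℤ) : 𝕜 :=
  (l (quadrant m)).1 ^ m.1.natAbs * (l (quadrant m)).2 ^ m.2.natAbs

def coneLinear (a b : Bool × Bool → ℝ) (m : ℤ × ℤ) : ℝ :=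
  a (quadrant m) * m.1.natAbs + b (quadrant m) * m.2.natAbs

theorem neg_log_norm_coneExp {𝕜 : Type*} [NormedDivisionRing 𝕜] {l : Bool × Bool → 𝕜 × 𝕜}
    (hl : ∀ σ, (l σ).1 ≠ 0 ∧ (l σ).2 ≠ 0) (m : ℤ × ℤ) :
    -Real.log ‖coneExp l m‖ =
      coneLinear (fun σ => -Real.log ‖(l σ).1‖) (fun σ => -Real.log ‖(l σ).2‖) m := by
  obtain ⟨h₁, h₂⟩ := hl (quadrant m)
  rw [coneExp, coneLinear, norm_mul, norm_pow, norm_pow,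
    Real.log_mul (by positivity) (by positivity), Real.log_pow, Real.log_pow]
  ring

theorem coneExp_ne_zero_of_antitone {𝕜 : Type*} [NormedDivisionRing 𝕜]
    {l : Bool × Bool → 𝕜 × 𝕜} (hne : ∃ σ, (l σ).1 * (l σ).2 ≠ 0) (e : ℕ ≃ ℤ × ℤ)
    (hmono : Antitone fun k => ‖coneExp l (e k)‖) (σ : Bool × Bool) :
    (l σ).1 ≠ 0 ∧ (l σ).2 ≠ 0 := by
  obtain ⟨τ, hτ⟩ := hne
  have hinf : {m | coneExp l m ≠ 0}.Infinite := by
    refine Set.infinite_of_injective_forall_mem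
      (f := fun u : ℕ => quadrantEquiv.symm ⟨τ, (u, u)⟩) (fun u v huv => ?_) fun u => ?_
    · simpa using quadrantEquiv.symm.injective huv
    · obtain ⟨h₁, h₂⟩ := mul_ne_zero_iff.mp hτ
      simp [coneExp, quadrant_quadrantEquiv_symm, h₁, h₂]
  have hσ := ne_zero_of_antitone_norm e hmono hinf (quadrantEquiv.symm ⟨σ, (1, 1)⟩)
  have hpos := quadrantEquiv_snd_le_natAbs (quadrantEquiv.symm ⟨σ, (1, 1)⟩)
  simp only [Equiv.apply_symm_apply] at hpos
  rw [coneExp, quadrant_quadrantEquiv_symm] at hσ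
  exact ⟨fun h => hσ (by rw [h, zero_pow (by omega), zero_mul]),
    fun h => hσ (by rw [h, zero_pow (by omega), mul_zero])⟩

section ConeLinear

variable {a b : Bool × Bool → ℝ}

theorem le_coneLinear_quadrantEquiv_symm (ha : ∀ σ, 0 ≤ a σ) (hb : ∀ σ, 0 ≤ b σ)
    (p : Σ _ : Bool × Bool, ℕ × ℕ) :
    a p.1 * p.2.1 + b p.1 * p.2.2 ≤ coneLinear a b (quadrantEquiv.symm p) := by
  have h := quadrantEquiv_snd_le_natAbs (quadrantEquiv.symm p)
  rw [Equiv.apply_symm_apply] at h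
  rw [coneLinear, quadrant_quadrantEquiv_symm]
  gcongr
  exacts [ha _, h.1, hb _, h.2]

theorem coneLinear_quadrantEquiv_symm_le (ha : ∀ σ, 0 ≤ a σ) (hb : ∀ σ, 0 ≤ b σ)
    (p : Σ _ : Bool × Bool, ℕ × ℕ) :
    coneLinear a b (quadrantEquiv.symm p) ≤ a p.1 * p.2.1 + b p.1 * p.2.2 + (a p.1 + b p.1) := by
  have h := natAbs_le_quadrantEquiv_snd_add_one (quadrantEquiv.symm p)
  rw [Equiv.apply_symm_apply] at h
  have h₁ : ((quadrantEquiv.symm p).1.natAbs : ℝ) ≤ p.2.1 + 1 := by exact_mod_cast h.1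
  have h₂ : ((quadrantEquiv.symm p).2.natAbs : ℝ) ≤ p.2.2 + 1 := by exact_mod_cast h.2
  rw [coneLinear, quadrant_quadrantEquiv_symm]
  nlinarith [mul_le_mul_of_nonneg_left h₁ (ha p.1), mul_le_mul_of_nonneg_left h₂ (hb p.1)]

/-- The area of the unit ball `{x : coneLinear a b x ≤ 1}` of the plane. -/
noncomputable def coneArea (a b : Bool × Bool → ℝ) : ℝ := (1 / 2) * ∑ σ, (a σ * b σ)⁻¹

theorem monotone_comp_trans_quadrantEquiv {e : ℕ ≃ ℤ × ℤ} (he : Monotone (coneLinear a b ∘ e)) :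
    Monotone ((coneLinear a b ∘ quadrantEquiv.symm) ∘ e.trans quadrantEquiv) := by
  simpa [Function.comp_def] using he

theorem coneLinear_nonneg (ha : ∀ σ, 0 ≤ a σ) (hb : ∀ σ, 0 ≤ b σ) (m : ℤ × ℤ) :
    0 ≤ coneLinear a b m :=
  add_nonneg (mul_nonneg (ha _) m.1.natAbs.cast_nonneg) (mul_nonneg (hb _) m.2.natAbs.cast_nonneg)

noncomputable def quadrantTriangles (a b : Bool × Bool → ℝ) (y : ℝ) :
    Finset (Σ _ : Bool × Bool, ℕ × ℕ) :=
  univ.sigma fun σ => latticeTriangle (a σ) (b σ) y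

theorem sum_div_two_mul_eq_coneArea_mul (y : ℝ) :
    ∑ σ, y / (2 * a σ * b σ) = coneArea a b * y := by
  rw [coneArea, mul_sum, sum_mul]
  refine sum_congr rfl fun σ _ => ?_
  field_simp

variable (ha : ∀ σ, 0 < a σ) (hb : ∀ σ, 0 < b σ)
include ha hb

theorem coneArea_pos : 0 < coneArea a b :=
  mul_pos one_half_pos
    (sum_pos (fun σ _ => inv_pos.mpr (mul_pos (ha σ) (hb σ))) univ_nonempty)

theorem coneArea_mul_sq_le_card {y : ℝ} (hy : 0 ≤ y) :
    coneArea a b * y ^ 2 ≤ (quadrantTriangles a b y).card := by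
  rw [← sum_div_two_mul_eq_coneArea_mul, quadrantTriangles, card_sigma, Nat.cast_sum]
  exact sum_le_sum fun σ _ => sq_div_le_card_latticeTriangle (ha σ) (hb σ) hy

theorem card_le_coneArea_mul_sq {y : ℝ} (hy : 0 ≤ y) :
    ((quadrantTriangles a b y).card : ℝ) ≤ coneArea a b * (y + ∑ σ, (a σ + b σ)) ^ 2 := by
  rw [← sum_div_two_mul_eq_coneArea_mul, quadrantTriangles, card_sigma, Nat.cast_sum]
  refine sum_le_sum fun σ _ => (card_latticeTriangle_le (ha σ) (hb σ) hy).trans ?_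
  have hσ : a σ + b σ ≤ ∑ τ, (a τ + b τ) :=
    single_le_sum (f := fun τ => a τ + b τ) (fun τ _ => (add_pos (ha τ) (hb τ)).le) (mem_univ σ)
  have := ha σ
  have := hb σ
  gcongr (?_ : ℝ) ^ 2 / _
  linarith

variable {e : ℕ ≃ ℤ × ℤ} (he : Monotone (coneLinear a b ∘ e))
include he

theorem sqrt_lt_sqrt_coneArea_mul (k : ℕ) :
    √k < √(coneArea a b) * (coneLinear a b (e k) + ∑ σ, (a σ + b σ)) := by
  have hg := coneLinear_nonneg (fun σ => (ha σ).le) (fun σ => (hb σ).le) (e k)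
  have hcard := succ_le_card_of_monotone_comp (k := k) (S := quadrantTriangles a b _)
    (monotone_comp_trans_quadrantEquiv he) fun p hp => by
      rw [quadrantTriangles, mem_sigma, mem_latticeTriangle (ha _) (hb _)]
      exact ⟨mem_univ _, (le_coneLinear_quadrantEquiv_symm (fun σ => (ha σ).le)
        (fun σ => (hb σ).le) p).trans (by simpa using hp)⟩
  have hk : (k : ℝ) < coneArea a b * (coneLinear a b (e k) + ∑ σ, (a σ + b σ)) ^ 2 :=
    lt_of_lt_of_le (by exact_mod_cast hcard) (card_le_coneArea_mul_sq ha hb hg)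
  have hK : 0 ≤ ∑ σ, (a σ + b σ) := sum_nonneg fun σ _ => (add_pos (ha σ) (hb σ)).le
  calc √k < √(coneArea a b * (coneLinear a b (e k) + ∑ σ, (a σ + b σ)) ^ 2) :=
        Real.sqrt_lt_sqrt k.cast_nonneg hk
    _ = _ := by rw [Real.sqrt_mul (coneArea_pos ha hb).le, Real.sqrt_sq (by positivity)]

theorem coneLinear_le_sqrt_div_add (k : ℕ) :
    coneLinear a b (e k) ≤ √(k + 1) / √(coneArea a b) + ∑ σ, (a σ + b σ) := by
  set y := √(k + 1) / √(coneArea a b)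
  have hA := coneArea_pos ha hb
  have hy : coneArea a b * y ^ 2 = k + 1 := by
    rw [div_pow, Real.sq_sqrt (by positivity), Real.sq_sqrt hA.le]; field_simp
  have hcard : k < (quadrantTriangles a b y).card := by
    have := coneArea_mul_sq_le_card ha hb (y := y) (by positivity)
    have : (k : ℝ) < (quadrantTriangles a b y).card := by linarith
    exact_mod_cast this
  suffices h : ∀ p ∈ quadrantTriangles a b y,
      coneLinear a b (quadrantEquiv.symm p) ≤ y + ∑ σ, (a σ + b σ) by
    simpa using le_of_lt_card_of_monotone_comp (monotone_comp_trans_quadrantEquiv he) h hcard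
  intro p hp
  rw [quadrantTriangles, mem_sigma, mem_latticeTriangle (ha _) (hb _)] at hp
  have hσ : a p.1 + b p.1 ≤ ∑ τ, (a τ + b τ) :=
    single_le_sum (f := fun τ => a τ + b τ) (fun τ _ => (add_pos (ha τ) (hb τ)).le) (mem_univ _)
  have := coneLinear_quadrantEquiv_symm_le (fun σ => (ha σ).le) (fun σ => (hb σ).le) p
  linarith [hp.2]

theorem tendsto_coneLinear_div_sqrt :
    Tendsto (fun k : ℕ => coneLinear a b (e k) / √k) atTop (𝓝 (√(coneArea a b))⁻¹) := by
  refine tendsto_div_sqrt_of_abs_sub_le (C := ∑ σ, (a σ + b σ) + (√(coneArea a b))⁻¹)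
    fun k => abs_le.mpr ⟨?_, ?_⟩
  · have h := sqrt_lt_sqrt_coneArea_mul ha hb he k
    have hA := Real.sqrt_pos.mpr (coneArea_pos ha hb)
    rw [← div_lt_iff₀' hA] at h
    rw [inv_mul_eq_div]
    nlinarith [inv_pos.mpr hA]
  · have h := coneLinear_le_sqrt_div_add ha hb he k
    have hsucc : √((k : ℝ) + 1) ≤ √k + 1 := Real.sqrt_le_iff.mpr
      ⟨by positivity, by nlinarith [Real.sq_sqrt k.cast_nonneg, Real.sqrt_nonneg k]⟩
    have : √((k : ℝ) + 1) / √(coneArea a b) ≤ (√(coneArea a b))⁻¹ * √k + (√(coneArea a b))⁻¹ := by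
      rw [div_eq_inv_mul, ← mul_add_one]; gcongr
    linarith

end ConeLinear

/-- a cone-wise exponential function on `ℤ²` (with values `λ_σ^{|n|}`
on the four half-open quadrants), if some `λ_{σ,1}λ_{σ,2} ≠ 0`, has its
modulus-decreasing enumeration decaying stretched-exponentially with rate
`η₂ = ((1/2) ∑_{σ : λ_{σ,1}λ_{σ,2} ≠ 0} (log|λ_{σ,1}| log|λ_{σ,2}|)⁻¹)^{-1/2}`. -/
theorem stmt13 (l : Bool × Bool → ℂ × ℂ)
    (hl : ∀ σ, ‖(l σ).1‖ < 1 ∧ ‖(l σ).2‖ < 1)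
    (hne : ∃ σ, (l σ).1 * (l σ).2 ≠ 0)
    (f : ℤ × ℤ → ℂ)
    (hf : ∀ n : ℤ × ℤ,
      f n = (l (decide (0 ≤ n.1), decide (0 ≤ n.2))).1 ^ n.1.natAbs *
            (l (decide (0 ≤ n.1), decide (0 ≤ n.2))).2 ^ n.2.natAbs)
    (e : ℕ ≃ ℤ × ℤ) (s : ℕ → ℂ) (hs : ∀ k, s k = f (e k))
    (hmono : Antitone fun k => ‖s k‖) :
    Filter.Tendsto (fun k : ℕ => -Real.log ‖s k‖ / Real.sqrt k)
      Filter.atTop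
      (nhds ((Real.sqrt ((1 / 2) * ∑ σ : Bool × Bool,
        if (l σ).1 * (l σ).2 ≠ 0 then
          (Real.log ‖(l σ).1‖ * Real.log ‖(l σ).2‖)⁻¹
        else 0))⁻¹) ) := by
  obtain rfl : f = coneExp l := funext hf
  obtain rfl : s = coneExp l ∘ e := funext hs
  have hl0 := coneExp_ne_zero_of_antitone hne e hmono
  set a := fun σ => -Real.log ‖(l σ).1‖
  set b := fun σ => -Real.log ‖(l σ).2‖
  have ha : ∀ σ, 0 < a σ := fun σ =>
    neg_pos.mpr (Real.log_neg (norm_pos_iff.mpr (hl0 σ).1) (hl σ).1)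
  have hb : ∀ σ, 0 < b σ := fun σ =>
    neg_pos.mpr (Real.log_neg (norm_pos_iff.mpr (hl0 σ).2) (hl σ).2)
  have hlog : ∀ m, -Real.log ‖coneExp l m‖ = coneLinear a b m := neg_log_norm_coneExp hl0
  have hmono' : Monotone (coneLinear a b ∘ e) := fun j k hjk => by
    simp only [Function.comp_apply, ← hlog]
    exact neg_le_neg (Real.log_le_log (norm_pos_iff.mpr (by simp [coneExp, hl0])) (hmono hjk))
  have harea : (1 / 2) * ∑ σ : Bool × Bool, (if (l σ).1 * (l σ).2 ≠ 0 then
      (Real.log ‖(l σ).1‖ * Real.log ‖(l σ).2‖)⁻¹ else 0) = coneArea a b := by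
    refine congrArg _ (sum_congr rfl fun σ _ => ?_)
    rw [if_pos (mul_ne_zero (hl0 σ).1 (hl0 σ).2), ← neg_mul_neg]
  simpa only [harea, Function.comp_apply, hlog] using tendsto_coneLinear_div_sqrt ha hb hmono'
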